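/- arXiv:1601.08056 — 3 statements merged into one kernel-verified Lean document; each statement's English description precedes it below -/
import Mathlib

section
/- Let ξ : [0,∞) → ℝ be a measurable path with u ↦ e^{αξ_u} locally integrable, α > 0, and let τ_t = inf{ s : ∫₀^s e^{αξ_u} du > t } be the right-continuous inverse of the continuous strictly increasing function s ↦ ∫₀^s e^{αξ_u} du. Then for every s ≥ 0 with τ_s < ∞, ∫₀^s e^{−2αξ_{τ_u}} du = ∫₀^{τ_s} e^{−αξ_u} du. -/
/-!
The primitive `A x = ∫₀ˣ e^{αξ_u} du` is continuous and strictly increasing on `[0, ∞)`, so `τ`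
inverts it there and `A (τ s) = s`. Substituting `u = A x` turns the left-hand side into
`∫₀^{τ s} e^{-2αξ_x} e^{αξ_x} dx`. Since `e^{αξ}` is only integrable, the substitution is done
with the one-dimensional change of variables on the set where `A` is differentiable: there
`A' = e^{αξ}` by Lebesgue differentiation, and its image has full measure in `[0, A (τ s)]`
because its measure is `∫ A' = A (τ s)`.
-/

open MeasureTheory intervalIntegral Set

section PrimitiveOfNonneg

variable {E : Type*} [NormedAddCommGroup E] [NormedSpace ℝ E] {f : ℝ → ℝ} {a b : ℝ}

theorem monotoneOn_primitive (hf : IntervalIntegrable f volume a b)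
    (hf₀ : ∀ x ∈ Icc a b, 0 ≤ f x) : MonotoneOn (fun x => ∫ t in a..x, f t) (Icc a b) := by
  intro x hx y hy hxy
  have hsub : ∀ z ∈ Icc a b, IntervalIntegrable f volume a z := fun z hz =>
    hf.mono_set (uIcc_subset_uIcc left_mem_uIcc (Icc_subset_uIcc hz))
  have hxy' : 0 ≤ ∫ t in x..y, f t :=
    integral_nonneg hxy fun u hu => hf₀ u ⟨hx.1.trans hu.1, hu.2.trans hy.2⟩
  linarith [integral_interval_sub_left (hsub y hy) (hsub x hx)]

theorem ae_hasDerivAt_primitive (hab : a ≤ b) (hf : IntervalIntegrable f volume a b) :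
    ∀ᵐ x, x ∈ Icc a b → HasDerivAt (fun x => ∫ t in a..x, f t) (f x) x := by
  filter_upwards [hf.ae_hasDerivAt_integral] with x hx hxab
  rw [← uIcc_of_le hab] at hxab
  exact hx hxab a left_mem_uIcc

theorem Icc_inter_differentiableAt_primitive_ae_eq (hab : a ≤ b)
    (hf : IntervalIntegrable f volume a b) :
    (Icc a b ∩ {x | DifferentiableAt ℝ (fun x => ∫ t in a..x, f t) x} : Set ℝ)
      =ᵐ[volume] Icc a b := by
  rw [Filter.eventuallyEq_set]
  filter_upwards [ae_hasDerivAt_primitive hab hf] with x hx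
  exact ⟨fun h => h.1, fun h => ⟨h, (hx h).differentiableAt⟩⟩

theorem image_primitive_ae_eq_Icc (hab : a ≤ b) (hf : IntervalIntegrable f volume a b)
    (hf₀ : ∀ x ∈ Icc a b, 0 ≤ f x) :
    (fun x => ∫ t in a..x, f t) ''
        (Icc a b ∩ {x | DifferentiableAt ℝ (fun x => ∫ t in a..x, f t) x})
      =ᵐ[volume] Icc 0 (∫ t in a..b, f t) := by
  set F := fun x => ∫ t in a..x, f t
  set s := Icc a b ∩ {x | DifferentiableAt ℝ F x}
  have hs : MeasurableSet s := measurableSet_Icc.inter (measurableSet_of_differentiableAt ℝ F)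
  have hmono : MonotoneOn F s := (monotoneOn_primitive hf hf₀).mono inter_subset_left
  have hsub : F '' s ⊆ Icc 0 (F b) := by
    rintro _ ⟨x, ⟨hx, -⟩, rfl⟩
    have := monotoneOn_primitive hf hf₀
    exact ⟨by simpa [F] using this (left_mem_Icc.2 hab) hx hx.1,
      this hx (right_mem_Icc.2 hab) hx.2⟩
  have hvol : volume (F '' s) = volume (Icc 0 (F b)) := calc
    volume (F '' s) = ∫⁻ x in s, ENNReal.ofReal (deriv F x) :=
      (lintegral_deriv_eq_volume_image_of_monotoneOn hs
        (fun x hx => hx.2.hasDerivAt.hasDerivWithinAt) hmono).symm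
    _ = ∫⁻ x in Icc a b, ENNReal.ofReal (f x) := by
      rw [setLIntegral_congr (Icc_inter_differentiableAt_primitive_ae_eq hab hf)]
      refine setLIntegral_congr_fun_ae measurableSet_Icc ?_
      filter_upwards [ae_hasDerivAt_primitive hab hf] with x hx hxab
      rw [(hx hxab).deriv]
    _ = ENNReal.ofReal (F b) := by
      rw [← ofReal_integral_eq_lintegral_ofReal, integral_Icc_eq_integral_Ioc,
        ← integral_of_le hab]
      · exact (intervalIntegrable_iff_integrableOn_Icc_of_le hab).1 hf
      · exact (ae_restrict_iff' measurableSet_Icc).2 (Filter.Eventually.of_forall hf₀)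
    _ = volume (Icc 0 (F b)) := by rw [Real.volume_Icc, sub_zero]
  exact ae_eq_of_subset_of_measure_ge hsub hvol.ge
    (hs.image_of_monotoneOn hmono).nullMeasurableSet (by simp [Real.volume_Icc])

theorem integral_smul_comp_primitive (hab : a ≤ b) (hf : IntervalIntegrable f volume a b)
    (hf₀ : ∀ x ∈ Icc a b, 0 ≤ f x) (g : ℝ → E) :
    ∫ x in a..b, f x • g (∫ t in a..x, f t) = ∫ u in (0 : ℝ)..(∫ t in a..b, f t), g u := by
  set F := fun x => ∫ t in a..x, f t
  set s := Icc a b ∩ {x | DifferentiableAt ℝ F x}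
  have hs : MeasurableSet s := measurableSet_Icc.inter (measurableSet_of_differentiableAt ℝ F)
  have hFb : 0 ≤ F b := integral_nonneg hab hf₀
  calc ∫ x in a..b, f x • g (F x) = ∫ x in s, deriv F x • g (F x) := by
        rw [integral_of_le hab, ← integral_Icc_eq_integral_Ioc,
          setIntegral_congr_set (Icc_inter_differentiableAt_primitive_ae_eq hab hf)]
        refine setIntegral_congr_ae measurableSet_Icc ?_
        filter_upwards [ae_hasDerivAt_primitive hab hf] with x hx hxab
        rw [(hx hxab).deriv]
    _ = ∫ u in F '' s, g u := (integral_image_eq_integral_deriv_smul_of_monotoneOn hs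
        (fun x hx => hx.2.hasDerivAt.hasDerivWithinAt)
        ((monotoneOn_primitive hf hf₀).mono inter_subset_left) g).symm
    _ = ∫ u in (0 : ℝ)..F b, g u := by
        rw [setIntegral_congr_set (image_primitive_ae_eq_Icc hab hf hf₀), integral_of_le hFb,
          integral_Icc_eq_integral_Ioc]

end PrimitiveOfNonneg

section HittingTime

variable {F : ℝ → ℝ} {a : ℝ}

theorem apply_sInf_setOf_lt_eq {s : ℝ} (hF : ContinuousOn F (Ici a)) (has : F a ≤ s)
    (hne : {x | a ≤ x ∧ s < F x}.Nonempty) : F (sInf {x | a ≤ x ∧ s < F x}) = s := by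
  set S := {x | a ≤ x ∧ s < F x}
  have hbdd : BddBelow S := ⟨a, fun x hx => hx.1⟩
  have haT : a ≤ sInf S := le_csInf hne fun x hx => hx.1
  have hclosed : IsClosed (Ici a ∩ F ⁻¹' Ici s) :=
    hF.preimage_isClosed_of_isClosed isClosed_Ici isClosed_Ici
  have hle : s ≤ F (sInf S) :=
    (closure_minimal (show S ⊆ Ici a ∩ F ⁻¹' Ici s from fun x hx => ⟨hx.1, hx.2.le⟩) hclosed
      (csInf_mem_closure hne hbdd)).2
  refine le_antisymm (not_lt.1 fun hlt => ?_) hle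
  have haT' : a < sInf S := haT.lt_of_ne fun h => not_le.2 hlt (h ▸ has)
  have hleft : ∀ᶠ x in nhdsWithin (sInf S) (Iio (sInf S)), x ∈ S := by
    have hIci : Ici a ∈ nhdsWithin (sInf S) (Iio (sInf S)) :=
      mem_nhdsWithin_of_mem_nhds (Ici_mem_nhds haT')
    filter_upwards [hIci, nhdsWithin_le_of_mem hIci ((hF _ haT).eventually (lt_mem_nhds hlt))]
      with x hxa hx using ⟨hxa, hx⟩
  obtain ⟨x, hxS, hxT⟩ := (hleft.and self_mem_nhdsWithin).exists
  exact not_le.2 hxT (csInf_le hbdd hxS)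

theorem sInf_setOf_apply_lt_eq (hF : StrictMonoOn F (Ici a)) {x : ℝ} (hx : a ≤ x) :
    sInf {y | a ≤ y ∧ F x < F y} = x := by
  have : {y | a ≤ y ∧ F x < F y} = Ioi x := by
    ext y
    refine ⟨fun ⟨hy, hxy⟩ => (hF.lt_iff_lt hx hy).1 hxy,
      fun hxy => ⟨hx.trans hxy.le, hF hx (hx.trans hxy.le) hxy⟩⟩
  rw [this, csInf_Ioi]

end HittingTime

section PrimitiveOnIci

variable {f : ℝ → ℝ} {a : ℝ}

theorem continuousOn_Ici_primitive (hf : ∀ b, a ≤ b → IntervalIntegrable f volume a b) :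
    ContinuousOn (fun x => ∫ t in a..x, f t) (Ici a) := by
  intro x hx
  have hcont := continuousOn_primitive_interval' (hf (x + 1) (by linarith [mem_Ici.1 hx]))
    left_mem_uIcc
  rw [uIcc_of_le (by linarith [mem_Ici.1 hx])] at hcont
  refine (hcont x ⟨hx, by linarith⟩).mono_of_mem_nhdsWithin ?_
  rw [← Ici_inter_Iic]
  exact inter_mem_nhdsWithin _ (Iic_mem_nhds (by linarith))

theorem strictMonoOn_Ici_primitive (hf : ∀ b, a ≤ b → IntervalIntegrable f volume a b)
    (hpos : ∀ x, a < x → 0 < f x) : StrictMonoOn (fun x => ∫ t in a..x, f t) (Ici a) := by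
  intro x hx y hy hxy
  have hxy' : 0 < ∫ t in x..y, f t :=
    intervalIntegral_pos_of_pos_on ((hf x hx).symm.trans (hf y hy))
      (fun u hu => hpos u (lt_of_le_of_lt hx hu.1)) hxy
  linarith [integral_interval_sub_left (hf y hy) (hf x hx)]

end PrimitiveOnIci

theorem lamperti_inversion_change_of_variables_general (ξ : ℝ → ℝ) (α : ℝ)
    (hint : ∀ s : ℝ, 0 ≤ s → IntervalIntegrable (fun u => Real.exp (α * ξ u)) volume 0 s)
    (τ : ℝ → ℝ)
    (hτ : ∀ t : ℝ, τ t = sInf {s : ℝ | 0 ≤ s ∧ t < ∫ u in (0:ℝ)..s, Real.exp (α * ξ u)})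
    (s : ℝ) (hs : 0 ≤ s)
    (hfin : {s' : ℝ | 0 ≤ s' ∧ s < ∫ u in (0:ℝ)..s', Real.exp (α * ξ u)}.Nonempty) :
    ∫ u in (0:ℝ)..s, Real.exp (-(2 * α) * ξ (τ u)) =
      ∫ u in (0:ℝ)..(τ s), Real.exp (-α * ξ u) := by
  set A := fun y => ∫ u in (0:ℝ)..y, Real.exp (α * ξ u)
  have hA_cont : ContinuousOn A (Ici 0) := continuousOn_Ici_primitive hint
  have hA_mono : StrictMonoOn A (Ici 0) :=
    strictMonoOn_Ici_primitive hint fun x _ => Real.exp_pos _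
  have hτs : 0 ≤ τ s := (hτ s).symm ▸ le_csInf hfin fun x hx => hx.1
  have hAτs : A (τ s) = s := hτ s ▸ apply_sInf_setOf_lt_eq hA_cont (by simpa [A]) hfin
  have hτA : ∀ x, 0 ≤ x → τ (A x) = x := fun x hx =>
    (hτ (A x)).trans (sInf_setOf_apply_lt_eq hA_mono hx)
  calc ∫ u in (0:ℝ)..s, Real.exp (-(2 * α) * ξ (τ u))
      = ∫ x in (0:ℝ)..τ s, Real.exp (α * ξ x) • Real.exp (-(2 * α) * ξ (τ (A x))) := by
        conv_lhs => rw [← hAτs]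
        exact (integral_smul_comp_primitive hτs (hint _ hτs) (fun x _ => (Real.exp_pos _).le)
          fun u => Real.exp (-(2 * α) * ξ (τ u))).symm
    _ = ∫ x in (0:ℝ)..τ s, Real.exp (-α * ξ x) := by
        refine integral_congr fun x hx => ?_
        rw [uIcc_of_le hτs] at hx
        simp only [hτA x hx.1, smul_eq_mul, ← Real.exp_add]
        ring_nf

/-- Change of variables for the Lamperti time change: with
`τ_t = inf{s ≥ 0 : ∫₀^s e^{αξ_u} du > t}`, for every `s ≥ 0` with `τ_s < ∞` one has
`∫₀^s e^{-2αξ_{τ_u}} du = ∫₀^{τ_s} e^{-αξ_u} du`. -/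
theorem lamperti_inversion_change_of_variables (ξ : ℝ → ℝ) (hmeas : Measurable ξ) (α : ℝ)
    (hα : 0 < α)
    (hint : ∀ s : ℝ, 0 ≤ s → IntervalIntegrable (fun u => Real.exp (α * ξ u)) volume 0 s)
    (τ : ℝ → ℝ)
    (hτ : ∀ t : ℝ, τ t = sInf {s : ℝ | 0 ≤ s ∧ t < ∫ u in (0:ℝ)..s, Real.exp (α * ξ u)})
    (s : ℝ) (hs : 0 ≤ s)
    (hfin : {s' : ℝ | 0 ≤ s' ∧ s < ∫ u in (0:ℝ)..s', Real.exp (α * ξ u)}.Nonempty) :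
    ∫ u in (0:ℝ)..s, Real.exp (-(2 * α) * ξ (τ u)) =
      ∫ u in (0:ℝ)..(τ s), Real.exp (-α * ξ u) :=
  lamperti_inversion_change_of_variables_general ξ α hint τ hτ s hs hfin
end

section
/- Let (Ω, μ) and ℝ with Lebesgue measure dz be given, let π be a σ-finite measure on a measurable space S, and let K_t(y, d(y₁,u)) be a kernel from S to S×ℝ. Define operators P_t f(y,z) = ∫ f(y₁, z+u) K_t(y, d(y₁,u)) and P̂_t f(y,z) = ∫ f(y₁, z−u) K_t(y, d(y₁,u)) acting on nonnegative measurable functions on S×ℝ. Then ∫_{S×ℝ} f(y,z) P_t g(y,z) π(dy)dz = ∫_{S×ℝ} g(y,z) P̂_t f(y,z) π(dy)dz for all nonnegative measurable f, g if and only if the measure K_t(y, dy₁ × dz) π(dy) on S×ℝ×S is symmetric under exchanging y and y₁, i.e. equals K_t(y₁, dy × dz) π(dy₁). -/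
open MeasureTheory ProbabilityTheory Set

/-!
Write `M = π ⊗ K` for the measure `K(y, dy₁ × du) π(dy)` on `S × S × ℝ` and
`Φ_{f,g}(y, y₁, u) = ∫ f(y, z) g(y₁, z + u) dz`. By Tonelli, the left side of the duality is
`∫ Φ_{f,g} dM`; by Tonelli and translation invariance of `dz`, the right side is the integral of
`Φ_{f,g}` against the image of `M` under `(y, y₁, u) ↦ (y₁, y, u)`. So reversibility gives duality,
and conversely it suffices that the integrals of all `Φ_{f,g}` determine a measure `μ` on
`S × S × ℝ`. They do: pushing `μ ⊗ dz` forward by the invertible shear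
`((y, y₁, u), z) ↦ ((y, z), (y₁, z + u))` gives a measure whose mass of `P × Q` is
`∫ Φ_{1_P, 1_Q} dμ`, so it is pinned down on rectangles, and `μ ⊗ dz` determines `μ`.
-/

section CrossCorrelation

variable {α β : Type*} [MeasurableSpace α] [MeasurableSpace β]

noncomputable def crossCorrelation (f : α × ℝ → ENNReal) (g : β × ℝ → ENNReal)
    (q : α × β × ℝ) : ENNReal :=
  ∫⁻ z, f (q.1, z) * g (q.2.1, z + q.2.2)

lemma measurable_crossCorrelation {f : α × ℝ → ENNReal} {g : β × ℝ → ENNReal}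
    (hf : Measurable f) (hg : Measurable g) : Measurable (crossCorrelation f g) :=
  Measurable.lintegral_prod_right'
    (f := fun r : (α × β × ℝ) × ℝ => f (r.1.1, r.2) * g (r.1.2.1, r.2 + r.1.2.2)) (by fun_prop)

def correlationShear : (α × β × ℝ) × ℝ ≃ᵐ (α × ℝ) × (β × ℝ) where
  toFun q := ((q.1.1, q.2), (q.1.2.1, q.2 + q.1.2.2))
  invFun p := ((p.1.1, p.2.1, p.2.2 - p.1.2), p.1.2)
  left_inv q := by simp
  right_inv p := by simp
  measurable_toFun := by simp only [Equiv.coe_fn_mk]; fun_prop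
  measurable_invFun := by simp only [Equiv.coe_fn_symm_mk]; fun_prop

lemma lintegral_map_correlationShear (μ : Measure (α × β × ℝ)) {f : α × ℝ → ENNReal}
    {g : β × ℝ → ENNReal} (hf : Measurable f) (hg : Measurable g) :
    ∫⁻ p, f p.1 * g p.2 ∂((μ.prod volume).map correlationShear) =
      ∫⁻ q, crossCorrelation f g q ∂μ := by
  rw [lintegral_map_equiv, lintegral_prod _ (by fun_prop)]
  rfl

lemma map_correlationShear_prod (μ : Measure (α × β × ℝ)) {P : Set (α × ℝ)} {Q : Set (β × ℝ)}
    (hP : MeasurableSet P) (hQ : MeasurableSet Q) :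
    (μ.prod volume).map correlationShear (P ×ˢ Q) =
      ∫⁻ q, crossCorrelation (P.indicator 1) (Q.indicator 1) q ∂μ := by
  rw [← lintegral_indicator_one (hP.prod hQ), ← lintegral_map_correlationShear μ
    (measurable_one.indicator hP) (measurable_one.indicator hQ)]
  simp_rw [← indicator_prod_one]

lemma map_correlationShear_prod_univ (μ : Measure (α × β × ℝ)) {P : Set (α × ℝ)}
    (hP : MeasurableSet P) :
    (μ.prod volume).map correlationShear (P ×ˢ univ) = μ.fst.prod volume P := by
  rw [map_correlationShear_prod μ hP .univ, Measure.prod_apply hP,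
    Measure.fst, lintegral_map (measurable_measure_prodMk_left hP) measurable_fst]
  refine lintegral_congr fun q => ?_
  simp only [crossCorrelation, indicator_univ, Pi.one_apply, mul_one]
  rw [← lintegral_indicator_one (measurable_prodMk_left hP)]
  rfl

theorem eq_of_lintegral_crossCorrelation_eq {μ ν : Measure (α × β × ℝ)} [SigmaFinite μ.fst]
    (h : ∀ f g, Measurable f → Measurable g →
      ∫⁻ q, crossCorrelation f g q ∂μ = ∫⁻ q, crossCorrelation f g q ∂ν) :
    μ = ν := by
  have hshear : (μ.prod volume).map correlationShear = (ν.prod volume).map correlationShear := by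
    refine Measure.ext_of_generateFrom_of_iUnion _
      (fun n => spanningSets (μ.fst.prod volume) n ×ˢ univ) generateFrom_prod.symm
      isPiSystem_prod ?_ ?_ ?_ ?_
    · rw [← iUnion_prod_const, iUnion_spanningSets, univ_prod_univ]
    · exact fun n => mem_image2_of_mem (measurableSet_spanningSets (μ.fst.prod volume) n)
        (MeasurableSet.univ : MeasurableSet (univ : Set (β × ℝ)))
    · intro n
      rw [map_correlationShear_prod_univ μ (measurableSet_spanningSets _ n)]
      exact (measure_spanningSets_lt_top _ n).ne
    · rintro _ ⟨P, hP, Q, hQ, rfl⟩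
      rw [map_correlationShear_prod μ hP hQ, map_correlationShear_prod ν hP hQ]
      exact h _ _ (measurable_one.indicator hP) (measurable_one.indicator hQ)
  have hprod : μ.prod (volume : Measure ℝ) = ν.prod volume := by
    simpa using congrArg (Measure.map correlationShear.symm) hshear
  ext s hs
  simpa using congrArg (fun m : Measure (_ × ℝ) => m (s ×ˢ Icc 0 1)) hprod

end CrossCorrelation

section Kernel

variable {α β γ : Type*} [MeasurableSpace α] [MeasurableSpace β] [MeasurableSpace γ]

lemma bind_map_prodMk_eq_compProd (μ : Measure α) [SFinite μ] (κ : Kernel α β)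
    [IsSFiniteKernel κ] : μ.bind (fun a => (κ a).map (Prod.mk a)) = μ ⊗ₘ κ := by
  rw [Measure.compProd_eq_comp_prod]
  congr 1
  funext a
  rw [Kernel.prod_apply, Kernel.id_apply, Measure.dirac_prod]

instance sigmaFinite_fst_compProd (μ : Measure α) [SigmaFinite μ] (κ : Kernel α β)
    [IsFiniteKernel κ] : SigmaFinite (μ ⊗ₘ κ).fst := by
  refine Measure.sigmaFinite_of_le ((Kernel.bound κ).toNNReal • μ)
    (Measure.le_iff.2 fun s hs => ?_)
  rw [Measure.fst_apply hs, ← prod_univ, Measure.compProd_apply_prod hs .univ,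
    Measure.smul_apply, ENNReal.smul_def, smul_eq_mul,
    ENNReal.coe_toNNReal (Kernel.bound_ne_top κ), ← setLIntegral_const]
  exact lintegral_mono fun a => Kernel.measure_le_bound κ a univ

lemma lintegral_prod_lintegral_kernel (μ : Measure α) [SFinite μ] (ν : Measure β) [SFinite ν]
    (κ : Kernel α γ) [IsSFiniteKernel κ] {F : (α × β) × γ → ENNReal} (hF : Measurable F) :
    ∫⁻ p, ∫⁻ c, F (p, c) ∂(κ p.1) ∂(μ.prod ν) = ∫⁻ q, ∫⁻ b, F ((q.1, b), q.2) ∂ν ∂(μ ⊗ₘ κ) := by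
  have hinner : Measurable fun p : α × β => ∫⁻ c, F (p, c) ∂(κ p.1) :=
    hF.lintegral_kernel_prod_right' (κ := κ.comap Prod.fst measurable_fst)
  rw [lintegral_prod _ hinner.aemeasurable, Measure.lintegral_compProd (by fun_prop)]
  refine lintegral_congr fun a => ?_
  exact lintegral_lintegral_swap (μ := ν) (ν := κ a) (f := fun b c => F ((a, b), c))
    (hF.comp (by fun_prop)).aemeasurable

end Kernel

section Duality

variable {S : Type*} [MeasurableSpace S] (π : Measure S) [SFinite π] (K : Kernel S (S × ℝ))
  [IsSFiniteKernel K] {f g : S × ℝ → ENNReal}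

lemma lintegral_mul_lintegral_add_eq_crossCorrelation (hf : Measurable f) (hg : Measurable g) :
    ∫⁻ p, f p * ∫⁻ q, g (q.1, p.2 + q.2) ∂(K p.1) ∂(π.prod volume) =
      ∫⁻ q, crossCorrelation f g q ∂(π ⊗ₘ K) := by
  calc _ = ∫⁻ p, ∫⁻ q, f p * g (q.1, p.2 + q.2) ∂(K p.1) ∂(π.prod volume) :=
        lintegral_congr fun p => (lintegral_const_mul _ (by fun_prop)).symm
    _ = _ := lintegral_prod_lintegral_kernel π volume K
        (F := fun r => f r.1 * g (r.2.1, r.1.2 + r.2.2)) (by fun_prop)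

lemma lintegral_mul_lintegral_sub_eq_crossCorrelation_swap (hf : Measurable f)
    (hg : Measurable g) :
    ∫⁻ p, g p * ∫⁻ q, f (q.1, p.2 - q.2) ∂(K p.1) ∂(π.prod volume) =
      ∫⁻ q, crossCorrelation f g (q.2.1, q.1, q.2.2) ∂(π ⊗ₘ K) := by
  calc _ = ∫⁻ p, ∫⁻ q, g p * f (q.1, p.2 - q.2) ∂(K p.1) ∂(π.prod volume) :=
        lintegral_congr fun p => (lintegral_const_mul _ (by fun_prop)).symm
    _ = ∫⁻ q, ∫⁻ z, g (q.1, z) * f (q.2.1, z - q.2.2) ∂volume ∂(π ⊗ₘ K) :=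
        lintegral_prod_lintegral_kernel π volume K
          (F := fun r => g r.1 * f (r.2.1, r.1.2 - r.2.2)) (by fun_prop)
    _ = _ := lintegral_congr fun q => by
        refine Eq.trans ?_ (lintegral_sub_right_eq_self
          (fun z => f (q.2.1, z) * g (q.1, z + q.2.2)) q.2.2)
        simp only [sub_add_cancel, mul_comm]

end Duality

/-- Weak duality of the semigroups `P_t f(y,z) = ∫ f(y₁, z+u) K(y, d(y₁,u))` and
`P̂_t f(y,z) = ∫ f(y₁, z-u) K(y, d(y₁,u))` with respect to `π(dy)dz` holds if and only if
the measure `K(y, dy₁ × dz) π(dy)` on `S × S × ℝ` is symmetric in `(y, y₁)`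
(reversibility of the MAP). -/
theorem map_duality_iff_reversible {S : Type*} [MeasurableSpace S]
    (π : Measure S) [SigmaFinite π] (K : Kernel S (S × ℝ)) [IsFiniteKernel K] :
    (∀ f g : S × ℝ → ENNReal, Measurable f → Measurable g →
      (∫⁻ p, f p * ∫⁻ q, g (q.1, p.2 + q.2) ∂(K p.1) ∂(π.prod (volume : Measure ℝ))) =
      (∫⁻ p, g p * ∫⁻ q, f (q.1, p.2 - q.2) ∂(K p.1) ∂(π.prod (volume : Measure ℝ)))) ↔
    (π.bind (fun y => (K y).map (fun p => (y, p.1, p.2)))).map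
        (fun q : S × S × ℝ => (q.2.1, q.1, q.2.2)) =
      π.bind (fun y => (K y).map (fun p => (y, p.1, p.2))) := by
  rw [bind_map_prodMk_eq_compProd]
  have hswap : ∀ {f g : S × ℝ → ENNReal}, Measurable f → Measurable g →
      ∫⁻ q, crossCorrelation f g q ∂((π ⊗ₘ K).map fun q => (q.2.1, q.1, q.2.2)) =
        ∫⁻ q, crossCorrelation f g (q.2.1, q.1, q.2.2) ∂(π ⊗ₘ K) :=
    fun hf hg => lintegral_map (measurable_crossCorrelation hf hg) (by fun_prop)
  constructor
  · intro hdual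
    refine (eq_of_lintegral_crossCorrelation_eq fun f g hf hg => ?_).symm
    rw [hswap hf hg, ← lintegral_mul_lintegral_add_eq_crossCorrelation π K hf hg,
      ← lintegral_mul_lintegral_sub_eq_crossCorrelation_swap π K hf hg]
    exact hdual f g hf hg
  · intro hrev f g hf hg
    rw [lintegral_mul_lintegral_add_eq_crossCorrelation π K hf hg,
      lintegral_mul_lintegral_sub_eq_crossCorrelation_swap π K hf hg, ← hswap hf hg, hrev]
end

section
/- Let P¹_t, P²_t, P³_t be sub-Markov kernels on an open set H ⊆ ℝ^d, and let h₁, h₂ : H → (0,∞) be continuous. Suppose: (a) ∫ (P¹_t f)(x) g(x) h₁(x) dx = ∫ f(x) (P²_t g)(x) h₁(x) dx for all nonnegative Borel f,g; (b) ∫ (P¹_t f)(x) g(x) h₂(x) dx = ∫ f(x) (P³_t g)(x) h₂(x) dx for all nonnegative Borel f,g; and (c) P²_t and P³_t map bounded continuous functions to continuous functions. Then with h = h₁/h₂, for all t ≥ 0, x ∈ H, and nonnegative Borel g: (P²_t g)(x) = (1/h(x)) · P³_t(h·g)(x). In particular h is excessive for P³_t, i.e. P³_t h ≤ h pointwise.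 -/
/-!
Testing the two duality relations against each other (with `h g` in the second) shows that
`h₁ · P² g` and `h₂ · P³ (h g)` have the same integral against every `f(x) dx`, so they agree
almost everywhere. For test functions `g = φ / (1 + h)` with `φ` bounded continuous, both
`g` and `h g` are bounded continuous, so by the Feller property both sides are continuous and
agree everywhere. A finite measure is determined by its integrals of bounded continuous
functions, so `h(x) P²_t(x, ·) = h P³_t(x, ·)` as measures, which is the claim; `g = 1` gives
excessiveness.
-/

open MeasureTheory ProbabilityTheory

/-- Lebesgue measure on a subset `H` of `ℝ^d`. -/
noncomputable def lebesgueOn {d : ℕ} (H : Set (EuclideanSpace ℝ (Fin d))) : Measure H :=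
  (volume : Measure (EuclideanSpace ℝ (Fin d))).comap (Subtype.val : H → EuclideanSpace ℝ (Fin d))

open scoped ENNReal NNReal BoundedContinuousFunction

section lebesgueOn

variable {d : ℕ} {H : Set (EuclideanSpace ℝ (Fin d))}

lemma sigmaFinite_lebesgueOn (hH : MeasurableSet H) : SigmaFinite (lebesgueOn H) :=
  SigmaFinite.of_map _ measurable_subtype_coe.aemeasurable <| by
    rw [lebesgueOn, map_comap_subtype_coe hH]
    infer_instance

lemma isOpenPosMeasure_lebesgueOn (hH : IsOpen H) : (lebesgueOn H).IsOpenPosMeasure :=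
  .comap _ hH.isOpenEmbedding_subtypeVal

end lebesgueOn

namespace MeasureTheory

variable {X : Type*} [MeasurableSpace X]

lemma ae_eq_of_forall_lintegral_mul_eq {μ : Measure X} [SigmaFinite μ] {F G : X → ℝ≥0∞}
    (hF : Measurable F) (hG : Measurable G)
    (h : ∀ f : X → ℝ≥0∞, Measurable f → ∫⁻ x, f x * F x ∂μ = ∫⁻ x, f x * G x ∂μ) :
    F =ᵐ[μ] G := by
  refine ae_eq_of_forall_setLIntegral_eq_of_sigmaFinite hF hG fun s hs _ => ?_
  have := h (s.indicator 1) (measurable_one.indicator hs)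
  simp only [← Set.indicator_mul_left, Pi.one_apply, one_mul] at this
  rwa [← lintegral_indicator hs, ← lintegral_indicator hs]

lemma Measure.eq_of_forall_lintegral_mul_eq [TopologicalSpace X] [HasOuterApproxClosed X]
    [BorelSpace X] {μ ν : Measure X} [IsFiniteMeasure μ] {w : X → ℝ≥0∞} (hw : Measurable w)
    (hw0 : ∀ x, w x ≠ 0) (hw1 : ∀ x, w x ≤ 1)
    (h : ∀ f : X →ᵇ ℝ≥0, ∫⁻ x, w x * f x ∂μ = ∫⁻ x, w x * f x ∂ν) : μ = ν := by
  have hwtop : ∀ x, w x ≠ ∞ := fun x => ((hw1 x).trans_lt ENNReal.one_lt_top).ne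
  have : IsFiniteMeasure (μ.withDensity w) := isFiniteMeasure_withDensity <|
    ((lintegral_mono hw1).trans_lt (by simp [measure_lt_top])).ne
  rw [← withDensity_inv_same hw (ae_of_all μ hw0) (ae_of_all μ hwtop),
    ← withDensity_inv_same hw (ae_of_all ν hw0) (ae_of_all ν hwtop)]
  congr 1
  refine ext_of_forall_lintegral_eq_of_IsFiniteMeasure fun f => ?_
  have hf : Measurable fun x => (f x : ℝ≥0∞) := by fun_prop
  simpa [lintegral_withDensity_eq_lintegral_mul _ hw hf] using h f

lemma lintegral_eq_inv_mul_of_smul_eq_withDensity {μ ν : Measure X} {c : ℝ≥0∞} (hc0 : c ≠ 0)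
    (hc : c ≠ ∞) {h : X → ℝ≥0∞} (hh : Measurable h) (hμν : c • μ = ν.withDensity h)
    {g : X → ℝ≥0∞} (hg : Measurable g) : ∫⁻ y, g y ∂μ = c⁻¹ * ∫⁻ y, h y * g y ∂ν := by
  have := lintegral_withDensity_eq_lintegral_mul ν hh hg
  simp only [Pi.mul_apply] at this
  rw [← this, ← hμν, lintegral_smul_measure, smul_eq_mul, ← mul_assoc,
    ENNReal.inv_mul_cancel hc0 hc, one_mul]

lemma lintegral_le_of_smul_eq_withDensity {μ ν : Measure X} (hμ : μ Set.univ ≤ 1) {c : ℝ≥0∞}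
    {h : X → ℝ≥0∞} (hμν : c • μ = ν.withDensity h) : ∫⁻ y, h y ∂ν ≤ c :=
  calc ∫⁻ y, h y ∂ν = (c • μ) Set.univ := by
        rw [hμν, withDensity_apply _ MeasurableSet.univ, Measure.restrict_univ]
    _ ≤ c := by simpa using mul_le_of_le_one_right' hμ

end MeasureTheory

namespace ProbabilityTheory.Kernel

variable {X : Type*} [MeasurableSpace X]

def IsWeakDual (P Q : Kernel X X) (ν : Measure X) : Prop :=
  ∀ f g : X → ℝ≥0∞, Measurable f → Measurable g →
    ∫⁻ x, (∫⁻ y, f y ∂(P x)) * g x ∂ν = ∫⁻ x, f x * ∫⁻ y, g y ∂(Q x) ∂ν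

lemma isWeakDual_withDensity_iff {P Q : Kernel X X} {μ : Measure X} {a : X → ℝ≥0∞}
    (ha : Measurable a) :
    IsWeakDual P Q (μ.withDensity a) ↔ ∀ f g : X → ℝ≥0∞, Measurable f → Measurable g →
      ∫⁻ x, (∫⁻ y, f y ∂(P x)) * g x * a x ∂μ = ∫⁻ x, f x * (∫⁻ y, g y ∂(Q x)) * a x ∂μ := by
  refine forall₄_congr fun f g hf hg => ?_
  have hPf : Measurable fun x => ∫⁻ y, f y ∂(P x) := hf.lintegral_kernel
  have hQg : Measurable fun x => ∫⁻ y, g y ∂(Q x) := hg.lintegral_kernel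
  rw [lintegral_withDensity_eq_lintegral_mul (g := fun x => (∫⁻ y, f y ∂(P x)) * g x) _ ha
      (hPf.mul hg),
    lintegral_withDensity_eq_lintegral_mul (g := fun x => f x * ∫⁻ y, g y ∂(Q x)) _ ha
      (hf.mul hQg)]
  simp only [Pi.mul_apply, mul_comm (a _)]

lemma IsWeakDual.mul_lintegral_ae_eq {P Q R : Kernel X X} {ν : Measure X} [SigmaFinite ν]
    {h : X → ℝ≥0∞} (hh : Measurable h) (hQ : IsWeakDual P Q (ν.withDensity h))
    (hR : IsWeakDual P R ν) {g : X → ℝ≥0∞} (hg : Measurable g) :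
    (fun z => h z * ∫⁻ y, g y ∂(Q z)) =ᵐ[ν] fun z => ∫⁻ y, h y * g y ∂(R z) := by
  refine ae_eq_of_forall_lintegral_mul_eq (hh.mul hg.lintegral_kernel)
    (hh.mul hg).lintegral_kernel fun f hf => ?_
  calc ∫⁻ z, f z * (h z * ∫⁻ y, g y ∂(Q z)) ∂ν
      = ∫⁻ z, f z * ∫⁻ y, g y ∂(Q z) ∂ν.withDensity h := by
        rw [lintegral_withDensity_eq_lintegral_mul (g := fun z => f z * ∫⁻ y, g y ∂(Q z)) _ hh
          (hf.mul hg.lintegral_kernel)]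
        exact lintegral_congr fun z => by simp only [Pi.mul_apply]; ring
    _ = ∫⁻ z, (∫⁻ y, f y ∂(P z)) * g z ∂ν.withDensity h := (hQ f g hf hg).symm
    _ = ∫⁻ z, (∫⁻ y, f y ∂(P z)) * (h z * g z) ∂ν := by
        rw [lintegral_withDensity_eq_lintegral_mul (g := fun z => (∫⁻ y, f y ∂(P z)) * g z) _ hh
          (hf.lintegral_kernel.mul hg)]
        exact lintegral_congr fun z => by simp only [Pi.mul_apply]; ring
    _ = ∫⁻ z, f z * ∫⁻ y, h y * g y ∂(R z) ∂ν := hR f _ hf (hh.mul hg)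

variable [TopologicalSpace X]

def IsFeller (κ : Kernel X X) : Prop :=
  ∀ φ : X → ℝ, Continuous φ → (∃ C, ∀ x, |φ x| ≤ C) → Continuous fun x => ∫ y, φ y ∂(κ x)

lemma IsFeller.continuous_lintegral_ofReal [OpensMeasurableSpace X] {κ : Kernel X X}
    [IsFiniteKernel κ] (hκ : κ.IsFeller) {φ : X → ℝ} (hφ : Continuous φ) (hφ0 : 0 ≤ φ) {C : ℝ}
    (hC : ∀ x, φ x ≤ C) : Continuous fun x => ∫⁻ y, ENNReal.ofReal (φ y) ∂(κ x) := by
  have hbdd : ∀ x, |φ x| ≤ C := fun x => (abs_of_nonneg (hφ0 x)).trans_le (hC x)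
  have hint : ∀ x, ∫⁻ y, ENNReal.ofReal (φ y) ∂(κ x) = ENNReal.ofReal (∫ y, φ y ∂(κ x)) :=
    fun x => (ofReal_integral_eq_lintegral_ofReal
      (.of_bound hφ.aestronglyMeasurable C (ae_of_all _ hbdd)) (ae_of_all _ hφ0)).symm
  simp only [hint]
  exact ENNReal.continuous_ofReal.comp (hκ φ hφ ⟨C, hbdd⟩)

lemma ofReal_mul_lintegral_eq_of_ae_eq [OpensMeasurableSpace X] {ν : Measure X}
    [ν.IsOpenPosMeasure] {Q R : Kernel X X} [IsFiniteKernel Q] [IsFiniteKernel R]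
    (hQ : Q.IsFeller) (hR : R.IsFeller) {h : X → ℝ} (hh : Continuous h) (hpos : ∀ x, 0 < h x)
    (hae : ∀ g : X → ℝ≥0∞, Measurable g → (fun z => ENNReal.ofReal (h z) * ∫⁻ y, g y ∂(Q z))
      =ᵐ[ν] fun z => ∫⁻ y, ENNReal.ofReal (h y) * g y ∂(R z))
    {u : X → ℝ} (hu : Continuous u) (hu0 : 0 ≤ u) {C : ℝ} (huC : ∀ y, u y ≤ C)
    (hhuC : ∀ y, h y * u y ≤ C) (z : X) :
    ENNReal.ofReal (h z) * ∫⁻ y, ENNReal.ofReal (u y) ∂(Q z) =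
      ∫⁻ y, ENNReal.ofReal (h y * u y) ∂(R z) := by
  have hLc : Continuous fun z => ENNReal.ofReal (h z) * ∫⁻ y, ENNReal.ofReal (u y) ∂(Q z) :=
    (ENNReal.continuous_ofReal.comp hh).ennreal_mul (hQ.continuous_lintegral_ofReal hu hu0 huC)
      (fun z => .inl (ENNReal.ofReal_pos.2 (hpos z)).ne') fun _ => .inr ENNReal.ofReal_ne_top
  have hRc : Continuous fun z => ∫⁻ y, ENNReal.ofReal (h y * u y) ∂(R z) :=
    hR.continuous_lintegral_ofReal (hh.mul hu) (fun y => mul_nonneg (hpos y).le (hu0 y)) hhuC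
  have hae' := hae _ (ENNReal.measurable_ofReal.comp hu.measurable)
  simp only [Function.comp_apply, ← ENNReal.ofReal_mul (hpos _).le] at hae'
  exact congrFun ((hLc.ae_eq_iff_eq ν hRc).1 hae') z

lemma smul_eq_withDensity_of_ae_eq [HasOuterApproxClosed X] [BorelSpace X] {ν : Measure X}
    [ν.IsOpenPosMeasure] {Q R : Kernel X X} [IsFiniteKernel Q] [IsFiniteKernel R]
    (hQ : Q.IsFeller) (hR : R.IsFeller) {h : X → ℝ} (hh : Continuous h) (hpos : ∀ x, 0 < h x)
    (hae : ∀ g : X → ℝ≥0∞, Measurable g → (fun z => ENNReal.ofReal (h z) * ∫⁻ y, g y ∂(Q z))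
      =ᵐ[ν] fun z => ∫⁻ y, ENNReal.ofReal (h y) * g y ∂(R z))
    (x : X) : ENNReal.ofReal (h x) • Q x = (R x).withDensity fun y => ENNReal.ofReal (h y) := by
  have hpos' : ∀ y, 0 < 1 + h y := fun y => by linarith [hpos y]
  set w : X → ℝ := fun y => (1 + h y)⁻¹
  have hw : Continuous w := (continuous_const.add hh).inv₀ fun y => (hpos' y).ne'
  have hw0 : ∀ y, 0 < w y := fun y => inv_pos.2 (hpos' y)
  have hw1 : ∀ y, w y ≤ 1 := fun y => inv_le_one_of_one_le₀ (by linarith [hpos y])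
  have hhw1 : ∀ y, h y * w y ≤ 1 := fun y => by
    rw [← div_eq_mul_inv, div_le_one (hpos' y)]; linarith
  have : IsFiniteMeasure (ENNReal.ofReal (h x) • Q x) := (Q x).smul_finite ENNReal.ofReal_ne_top
  refine Measure.eq_of_forall_lintegral_mul_eq (ENNReal.measurable_ofReal.comp hw.measurable)
    (fun y => (ENNReal.ofReal_pos.2 (hw0 y)).ne') (fun y => ENNReal.ofReal_le_one.2 (hw1 y))
    fun φ => ?_
  have hφ : Continuous fun y => (φ y : ℝ) := NNReal.continuous_coe.comp φ.continuous
  have hφC : ∀ y, (φ y : ℝ) ≤ nndist φ 0 := fun y =>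
    NNReal.coe_le_coe.2 (BoundedContinuousFunction.NNReal.upper_bound φ y)
  have key := ofReal_mul_lintegral_eq_of_ae_eq hQ hR hh hpos hae (u := fun y => w y * φ y)
    (hw.mul hφ) (fun y => mul_nonneg (hw0 y).le (φ y).2)
    (fun y => (mul_le_of_le_one_left (φ y).2 (hw1 y)).trans (hφC y))
    (fun y => by
      rw [← mul_assoc]
      exact (mul_le_of_le_one_left (φ y).2 (hhw1 y)).trans (hφC y)) x
  rw [lintegral_smul_measure, lintegral_withDensity_eq_lintegral_mul_non_measurable _
    hh.measurable.ennreal_ofReal (ae_of_all _ fun _ => ENNReal.ofReal_lt_top)]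
  simpa only [ENNReal.ofReal_mul (hw0 _).le, ENNReal.ofReal_mul (hpos _).le,
    ENNReal.ofReal_coe_nnreal, Function.comp_apply, smul_eq_mul, Pi.mul_apply, mul_assoc]
    using key

end ProbabilityTheory.Kernel

/-- If `P²` and `P³` are both weak duals of `P¹` with respect to the measures `h₁(x)dx`
and `h₂(x)dx` on an open set `H`, and `P²`, `P³` are Feller, then `P²` is the Doob
`h`-transform of `P³` with `h = h₁/h₂`; in particular `h` is excessive for `P³`. -/
theorem duality_gives_doob_h_transform {d : ℕ} (H : Set (EuclideanSpace ℝ (Fin d)))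
    (hH : IsOpen H)
    (P₁ P₂ P₃ : ℝ → Kernel H H)
    (hsub : ∀ t : ℝ, 0 ≤ t → ∀ x : H, (P₁ t x) Set.univ ≤ 1 ∧ (P₂ t x) Set.univ ≤ 1 ∧
      (P₃ t x) Set.univ ≤ 1)
    (h₁ h₂ : H → ℝ) (h₁cont : Continuous h₁) (h₂cont : Continuous h₂)
    (h₁pos : ∀ x, 0 < h₁ x) (h₂pos : ∀ x, 0 < h₂ x)
    (hdual₁ : ∀ t : ℝ, 0 ≤ t → ∀ f g : H → ENNReal, Measurable f → Measurable g →
      (∫⁻ x, (∫⁻ y, f y ∂(P₁ t x)) * g x * ENNReal.ofReal (h₁ x) ∂lebesgueOn H) =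
      ∫⁻ x, f x * (∫⁻ y, g y ∂(P₂ t x)) * ENNReal.ofReal (h₁ x) ∂lebesgueOn H)
    (hdual₂ : ∀ t : ℝ, 0 ≤ t → ∀ f g : H → ENNReal, Measurable f → Measurable g →
      (∫⁻ x, (∫⁻ y, f y ∂(P₁ t x)) * g x * ENNReal.ofReal (h₂ x) ∂lebesgueOn H) =
      ∫⁻ x, f x * (∫⁻ y, g y ∂(P₃ t x)) * ENNReal.ofReal (h₂ x) ∂lebesgueOn H)
    (hFeller₂ : ∀ t : ℝ, 0 ≤ t → ∀ φ : H → ℝ, Continuous φ → (∃ C, ∀ x, |φ x| ≤ C) →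
      Continuous (fun x => ∫ y, φ y ∂(P₂ t x)))
    (hFeller₃ : ∀ t : ℝ, 0 ≤ t → ∀ φ : H → ℝ, Continuous φ → (∃ C, ∀ x, |φ x| ≤ C) →
      Continuous (fun x => ∫ y, φ y ∂(P₃ t x))) :
    ∀ t : ℝ, 0 ≤ t → ∀ x : H,
      (∀ g : H → ENNReal, Measurable g →
        (∫⁻ y, g y ∂(P₂ t x)) =
          (ENNReal.ofReal (h₁ x / h₂ x))⁻¹ *
            ∫⁻ y, ENNReal.ofReal (h₁ y / h₂ y) * g y ∂(P₃ t x)) ∧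
      (∫⁻ y, ENNReal.ofReal (h₁ y / h₂ y) ∂(P₃ t x)) ≤ ENNReal.ofReal (h₁ x / h₂ x) := by
  intro t ht x
  have : IsFiniteKernel (P₂ t) := ⟨⟨1, ENNReal.one_lt_top, fun z => (hsub t ht z).2.1⟩⟩
  have : IsFiniteKernel (P₃ t) := ⟨⟨1, ENNReal.one_lt_top, fun z => (hsub t ht z).2.2⟩⟩
  have : SigmaFinite (lebesgueOn H) := sigmaFinite_lebesgueOn hH.measurableSet
  have : (lebesgueOn H).IsOpenPosMeasure := isOpenPosMeasure_lebesgueOn hH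
  have hpos : ∀ y, 0 < h₁ y / h₂ y := fun y => div_pos (h₁pos y) (h₂pos y)
  have hcont : Continuous fun y => h₁ y / h₂ y := h₁cont.div h₂cont fun y => (h₂pos y).ne'
  have hmeas := hcont.measurable.ennreal_ofReal
  set ν := (lebesgueOn H).withDensity fun y => ENNReal.ofReal (h₂ y)
  have : ν.IsOpenPosMeasure :=
    (withDensity_absolutelyContinuous' h₂cont.measurable.ennreal_ofReal.aemeasurable
      (ae_of_all _ fun y => (ENNReal.ofReal_pos.2 (h₂pos y)).ne')).isOpenPosMeasure
  have hν : (ν.withDensity fun y => ENNReal.ofReal (h₁ y / h₂ y)) =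
      (lebesgueOn H).withDensity fun y => ENNReal.ofReal (h₁ y) := by
    rw [← withDensity_mul _ h₂cont.measurable.ennreal_ofReal hmeas]
    congr 1 with y
    simp only [Pi.mul_apply, ← ENNReal.ofReal_mul (h₂pos y).le, mul_div_cancel₀ _ (h₂pos y).ne']
  have hdual₂₁ : Kernel.IsWeakDual (P₁ t) (P₂ t)
      (ν.withDensity fun y => ENNReal.ofReal (h₁ y / h₂ y)) := by
    rw [hν, Kernel.isWeakDual_withDensity_iff h₁cont.measurable.ennreal_ofReal]
    exact hdual₁ t ht
  have hdual₃₁ : Kernel.IsWeakDual (P₁ t) (P₃ t) ν :=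
    (Kernel.isWeakDual_withDensity_iff h₂cont.measurable.ennreal_ofReal).2 (hdual₂ t ht)
  have htransform := Kernel.smul_eq_withDensity_of_ae_eq (hFeller₂ t ht) (hFeller₃ t ht) hcont
    hpos (fun g hg => hdual₂₁.mul_lintegral_ae_eq hmeas hdual₃₁ hg) x
  exact ⟨fun g hg => lintegral_eq_inv_mul_of_smul_eq_withDensity
    (ENNReal.ofReal_pos.2 (hpos x)).ne' ENNReal.ofReal_ne_top hmeas htransform hg,
    lintegral_le_of_smul_eq_withDensity (hsub t ht x).2.1 htransform⟩
end
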